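/- arXiv:1204.2454 — 3 statements merged into one kernel-verified Lean document; each statement's English description precedes it below -/
import Mathlib

section
/- Suppose l ≥ 1 and s1 ≥ 1 are integers, with 1 ≤ s1 ≤ s2 ≤ ... ≤ sl. Let K denote the complete (l+1)-partite graph with colour classes C0, C1, ..., Cl of sizes 1, s1, ..., sl respectively. If V1, ..., Vl is a partition of the vertex set of K such that every vertex has at most s1 − 1 neighbours in its own part, then some part Vj contains a triangle (three mutually adjacent vertices). -/
/-! If no part contains a triangle, every part meets at most two colour classes. A part that
meets a class `C` and some other class contains a vertex adjacent to all of its vertices in `C`,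
so it holds at most `s₁ - 1` vertices of `C`. Hence a class that is not the only colour of some
part must be spread over two-coloured parts: at least two of them for `Cᵢ` with `i ≥ 1`, since
`|Cᵢ| ≥ s₁ > s₁ - 1`, and at least one for `C₀`. Double counting the incidences between these
classes and the two-coloured parts, and matching the remaining classes with one-coloured parts,
gives `l + 1 ≤ l`. -/

open Finset

section Colours

variable {ι κ : Type*} [Fintype ι] [Fintype κ] [DecidableEq κ] (col : ι → Finset κ)

theorem card_filter_exists_eq_singleton_le :
    #{t | ∃ j, col j = {t}} ≤ #{j | #(col j) ≤ 1} :=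
  calc #{t | ∃ j, col j = {t}} ≤ #(({j | #(col j) ≤ 1} : Finset ι).biUnion col) :=
        card_le_card fun t ht => by
          obtain ⟨j, hj⟩ := (mem_filter.1 ht).2
          exact mem_biUnion.2 ⟨j, by simp [hj], by simp [hj]⟩
    _ ≤ ∑ j with #(col j) ≤ 1, #(col j) := card_biUnion_le
    _ ≤ ∑ j with #(col j) ≤ 1, 1 := sum_le_sum fun j hj => (mem_filter.1 hj).2
    _ = #{j | #(col j) ≤ 1} := by simp

theorem card_filter_mem_le_ite (hcol : ∀ j, #(col j) ≤ 2) (j : ι) :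
    #{t | (∀ i, col i ≠ {t}) ∧ t ∈ col j} ≤ if 1 < #(col j) then 2 else 0 := by
  split_ifs with hj
  · exact (card_le_card fun t ht => (mem_filter.1 ht).2.2).trans (hcol j)
  · refine (card_eq_zero.2 (filter_eq_empty_iff.2 fun t _ ⟨hpure, htj⟩ => hpure j ?_)).le
    exact eq_singleton_iff_unique_mem.2 ⟨htj, fun x hx => card_le_one.1 (by omega) x hx t htj⟩

theorem sum_card_filter_mem_le (hcol : ∀ j, #(col j) ≤ 2) :
    ∑ t with ∀ j, col j ≠ {t}, #{j | t ∈ col j} ≤ 2 * #{j | 1 < #(col j)} :=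
  calc ∑ t with ∀ j, col j ≠ {t}, #{j | t ∈ col j}
      = ∑ j, #{t | (∀ i, col i ≠ {t}) ∧ t ∈ col j} := by
        simpa [bipartiteAbove, bipartiteBelow, filter_filter] using
          sum_card_bipartiteAbove_eq_sum_card_bipartiteBelow (s := {t | ∀ j, col j ≠ {t}})
            (t := univ) (fun t j => t ∈ col j)
    _ ≤ ∑ j, if 1 < #(col j) then 2 else 0 :=
        sum_le_sum fun j _ => card_filter_mem_le_ite col hcol j
    _ = 2 * #{j | 1 < #(col j)} := by simp [sum_ite, mul_comm]

theorem card_le_card_of_two_le_card_filter_mem (hcol : ∀ j, #(col j) ≤ 2) (t₀ : κ)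
    (h₀ : ∃ j, t₀ ∈ col j) (hdeg : ∀ t ≠ t₀, (∀ j, col j ≠ {t}) → 2 ≤ #{j | t ∈ col j}) :
    Fintype.card κ ≤ Fintype.card ι := by
  -- `t₀` may meet just one part; the indicator term pays for its missing second incidence.
  have htwo : ∀ t, (∀ j, col j ≠ {t}) → 2 ≤ #{j | t ∈ col j} + if t = t₀ then 1 else 0 := by
    intro t hpure
    split_ifs with ht
    · obtain ⟨j, hj⟩ := h₀
      have : 0 < #{j | t ∈ col j} := card_pos.2 ⟨j, by simpa [ht] using hj⟩
      omega
    · exact hdeg t ht hpure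
  have hlight : 2 * #{t | ∀ j, col j ≠ {t}} ≤ 2 * #{j | 1 < #(col j)} + 1 :=
    calc 2 * #{t | ∀ j, col j ≠ {t}}
        = ∑ t with ∀ j, col j ≠ {t}, 2 := by rw [sum_const, smul_eq_mul, mul_comm]
      _ ≤ ∑ t with ∀ j, col j ≠ {t}, (#{j | t ∈ col j} + if t = t₀ then 1 else 0) :=
          sum_le_sum fun t ht => htwo t (mem_filter.1 ht).2
      _ ≤ ∑ t with ∀ j, col j ≠ {t}, #{j | t ∈ col j} + 1 := by
          rw [sum_add_distrib, sum_ite_eq']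
          gcongr
          split_ifs <;> simp
      _ ≤ 2 * #{j | 1 < #(col j)} + 1 := by gcongr; exact sum_card_filter_mem_le col hcol
  have hpure := card_filter_exists_eq_singleton_le col
  have hκ := card_filter_add_card_filter_not (s := univ) fun t => ∃ j, col j = {t}
  have hι := card_filter_add_card_filter_not (s := univ) fun j => #(col j) ≤ 1
  simp only [not_exists, ← ne_eq, not_le, card_univ] at hκ hι
  omega

end Colours

section Partition

variable {V ι κ : Type*} [Fintype V] [DecidableEq ι] [DecidableEq κ] (c : V → κ) (π : V → ι)

def partColours (j : ι) : Finset κ := image c {v | π v = j}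

theorem mem_partColours {j : ι} {t : κ} : t ∈ partColours c π j ↔ ∃ v, π v = j ∧ c v = t := by
  simp [partColours]

theorem card_partColours_le_two {j : ι}
    (h : ∀ a b d, π a = j → π b = j → π d = j → c a ≠ c b → c b ≠ c d → c a = c d) :
    #(partColours c π j) ≤ 2 := by
  by_contra! hlt
  obtain ⟨_, hx, _, hy, _, hz, hxy, hxz, hyz⟩ := two_lt_card.1 hlt
  obtain ⟨a, ha, rfl⟩ := (mem_partColours c π).1 hx
  obtain ⟨b, hb, rfl⟩ := (mem_partColours c π).1 hy
  obtain ⟨d, hd, rfl⟩ := (mem_partColours c π).1 hz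
  exact hxz (h a b d ha hb hd hxy hyz)

variable {m : ℕ} (hdeg : ∀ v, #{w | c v ≠ c w ∧ π w = π v} ≤ m)
include hdeg

theorem card_filter_colour_part_le {t : κ} {j : ι} (h : ∃ w, π w = j ∧ c w ≠ t) :
    #{v | c v = t ∧ π v = j} ≤ m := by
  obtain ⟨w, rfl, hw⟩ := h
  refine (card_le_card fun v hv => ?_).trans (hdeg w)
  simp only [mem_filter, mem_univ, true_and] at hv ⊢
  exact ⟨hv.1 ▸ hw, hv.2⟩

variable [Fintype ι] in
theorem card_filter_colour_le {t : κ} (ht : ∀ j, partColours c π j ≠ {t}) :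
    #{v | c v = t} ≤ m * #{j | t ∈ partColours c π j} := by
  refine card_le_mul_card_image_of_maps_to (f := π) (fun v hv => ?_) m fun j hj => ?_
  · simpa [mem_partColours] using ⟨v, rfl, (mem_filter.1 hv).2⟩
  · rw [filter_filter]
    refine card_filter_colour_part_le c π hdeg ?_
    by_contra! hall
    refine ht j (eq_singleton_iff_unique_mem.2 ⟨(mem_filter.1 hj).2, fun x hx => ?_⟩)
    obtain ⟨w, hw, rfl⟩ := (mem_partColours c π).1 hx
    exact hall w hw

end Partition

theorem stmt_4 {l : ℕ} (hl : 1 ≤ l) (s : Fin l → ℕ)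
    (hpos : ∀ i, 1 ≤ s i) (hmono : Monotone s)
    {V : Type*} [Fintype V] (c : V → Fin (l + 1))
    (h0 : {v | c v = 0}.ncard = 1)
    (hsize : ∀ i : Fin l, {v | c v = i.succ}.ncard = s i)
    (K : SimpleGraph V) (hK : ∀ a b, K.Adj a b ↔ c a ≠ c b)
    (π : V → Fin l)
    (hdeg : ∀ v, {w | K.Adj v w ∧ π w = π v}.ncard ≤ s ⟨0, hl⟩ - 1) :
    ∃ (j : Fin l) (a b c' : V), π a = j ∧ π b = j ∧ π c' = j ∧
      K.Adj a b ∧ K.Adj b c' ∧ K.Adj a c' := by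
  classical
  by_contra! htriangle
  simp only [hK, ne_eq, not_not] at htriangle hdeg
  simp only [Set.ncard_eq_toFinset_card', Set.toFinset_ofPred] at hsize hdeg
  have hlight : ∀ t ≠ 0, (∀ j, partColours c π j ≠ {t}) → 2 ≤ #{j | t ∈ partColours c π j} := by
    intro t ht hpure
    obtain ⟨i, rfl⟩ := Fin.exists_succ_eq.2 ht
    have hbound := card_filter_colour_le c π hdeg hpure
    rw [hsize i] at hbound
    have hs : s ⟨0, hl⟩ ≤ s i := hmono (Nat.zero_le _)
    have := hpos i
    exact Nat.lt_of_mul_lt_mul_left (a := s ⟨0, hl⟩ - 1) (by omega)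
  obtain ⟨v, hv⟩ := Set.ncard_eq_one.1 h0
  have hv0 : c v = 0 := by simpa using hv.ge rfl
  have hcol j : #(partColours c π j) ≤ 2 := card_partColours_le_two c π (htriangle j)
  simpa using card_le_card_of_two_le_card_filter_mem (partColours c π) hcol 0
    ⟨π v, (mem_partColours c π).2 ⟨v, rfl, hv0⟩⟩ hlight
end

section
/- Let l ≥ 2, d ≥ 0, m = (l+1)d + 1. Let G be a graph whose vertex set is partitioned into l parts V1,...,Vl such that every vertex has at most d neighbours in its own part. Suppose v and w are vertices, and u_1, ..., u_{(l-1)m} are distinct vertices, each adjacent to both v and w, such that for every k with 2 ≤ k ≤ l−1 and all indices i ≤ (k−1)m < j, u_i is adjacent to u_j. Then v and w lie in the same part. -/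
theorem stmt_13 {V : Type*} [Fintype V] {l d : ℕ} (hl : 2 ≤ l)
    (G : SimpleGraph V) (π : V → Fin l)
    (hdeg : ∀ v, {w | G.Adj v w ∧ π w = π v}.ncard ≤ d)
    (m : ℕ) (hm : m = (l + 1) * d + 1)
    (v w : V)
    (u : Fin ((l - 1) * m) → V) (hinj : Function.Injective u)
    (hadjv : ∀ i, G.Adj v (u i)) (hadjw : ∀ i, G.Adj w (u i))
    (hcross : ∀ k, 2 ≤ k → k ≤ l - 1 → ∀ i j : Fin ((l - 1) * m),
      (i : ℕ) < (k - 1) * m → (k - 1) * m ≤ (j : ℕ) → G.Adj (u i) (u j)) :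
    π v = π w := by
  classical
  by_contra hne
  -- bad set bound
  have hbad : ∀ x : V, (Finset.univ.filter
      (fun j : Fin ((l-1)*m) => G.Adj x (u j) ∧ π (u j) = π x)).card ≤ d := by
    intro x
    set s := Finset.univ.filter
      (fun j : Fin ((l-1)*m) => G.Adj x (u j) ∧ π (u j) = π x) with hs
    have h1 : (s.image u).card = s.card := Finset.card_image_of_injective s hinj
    have h2 : s.image u ⊆ {y | G.Adj x y ∧ π y = π x}.toFinset := by
      intro y hy
      simp only [Finset.mem_image] at hy
      obtain ⟨j, hj, rfl⟩ := hy
      rw [hs, Finset.mem_filter] at hj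
      simp only [Set.mem_toFinset, Set.mem_setOf_eq]
      exact hj.2
    calc s.card = (s.image u).card := h1.symm
      _ ≤ _ := Finset.card_le_card h2
      _ = {y | G.Adj x y ∧ π y = π x}.ncard := (Set.ncard_eq_toFinset_card' _).symm
      _ ≤ d := hdeg x
  have main : ∀ k, k ≤ l - 1 → ∃ c : Fin k → Fin ((l-1)*m),
      (∀ r : Fin k, (r:ℕ)*m ≤ (c r : ℕ) ∧ (c r : ℕ) < ((r:ℕ)+1)*m) ∧
      (∀ r, π (u (c r)) ≠ π v) ∧ (∀ r, π (u (c r)) ≠ π w) ∧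
      (∀ r s : Fin k, r ≠ s → π (u (c r)) ≠ π (u (c s))) := by
    intro k
    induction k with
    | zero =>
      intro _
      exact ⟨Fin.elim0, fun r => r.elim0, fun r => r.elim0, fun r => r.elim0,
        fun r => r.elim0⟩
    | succ k ih =>
      intro hk
      obtain ⟨c, hblock, hv, hw, hdist⟩ := ih (le_trans (Nat.le_succ k) hk)
      -- the map into block k
      have hfval : ∀ i : Fin m, k*m + (i:ℕ) < (l-1)*m := by
        intro i
        have hi := i.2
        have h1 : k*m + (i:ℕ) < (k+1)*m := by rw [Nat.succ_mul]; omega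
        have h2 : (k+1)*m ≤ (l-1)*m := Nat.mul_le_mul_right m hk
        omega
      set f : Fin m → Fin ((l-1)*m) := fun i => ⟨k*m + (i:ℕ), hfval i⟩ with hf
      have hex : ∃ i : Fin m, ¬ (π (u (f i)) = π v ∨ π (u (f i)) = π w ∨
          ∃ r : Fin k, π (u (f i)) = π (u (c r))) := by
        by_contra hcon
        push_neg at hcon
        set B : Finset (Fin ((l-1)*m)) :=
          (Finset.univ.filter (fun j => G.Adj v (u j) ∧ π (u j) = π v)) ∪
          ((Finset.univ.filter (fun j => G.Adj w (u j) ∧ π (u j) = π w)) ∪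
          (Finset.univ.biUnion (fun r : Fin k =>
            Finset.univ.filter
              (fun j => G.Adj (u (c r)) (u j) ∧ π (u j) = π (u (c r)))))) with hB
        have hsub : Finset.univ.image f ⊆ B := by
          intro j hj
          simp only [Finset.mem_image] at hj
          obtain ⟨i, -, rfl⟩ := hj
          rcases hcon i with h | h | ⟨r, h⟩
          · rw [hB]
            simp only [Finset.mem_union, Finset.mem_filter, Finset.mem_univ, true_and]
            exact Or.inl ⟨hadjv _, h⟩
          · rw [hB]
            simp only [Finset.mem_union, Finset.mem_filter, Finset.mem_univ, true_and]
            exact Or.inr (Or.inl ⟨hadjw _, h⟩)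
          · have hadj : G.Adj (u (c r)) (u (f i)) := by
              have hkpos : 0 < k := r.pos
              have hb := hblock r
              have hr1 : ((r:ℕ)+1)*m ≤ k*m :=
                Nat.mul_le_mul_right m (by omega : (r:ℕ)+1 ≤ k)
              refine hcross (k+1) (by omega) hk (c r) (f i) ?_ ?_
              · simp only [Nat.add_sub_cancel]
                omega
              · simp only [Nat.add_sub_cancel, hf]
                exact Nat.le_add_right _ _
            rw [hB]
            simp only [Finset.mem_union, Finset.mem_biUnion, Finset.mem_filter,
              Finset.mem_univ, true_and]
            exact Or.inr (Or.inr ⟨r, hadj, h⟩)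
        have hfinj : Function.Injective f := by
          intro a b hab
          have : k*m + (a:ℕ) = k*m + (b:ℕ) := congrArg Fin.val hab
          exact Fin.ext (by omega)
        have hcard1 : (Finset.univ.image f).card = m := by
          rw [Finset.card_image_of_injective _ hfinj, Finset.card_univ,
            Fintype.card_fin]
        have hcard2 : B.card ≤ d + (d + k * d) := by
          rw [hB]
          refine le_trans (Finset.card_union_le _ _) ?_
          refine Nat.add_le_add (hbad v) ?_
          refine le_trans (Finset.card_union_le _ _) ?_
          refine Nat.add_le_add (hbad w) ?_
          refine le_trans (Finset.card_biUnion_le) ?_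
          calc ∑ r : Fin k, (Finset.univ.filter
              (fun j => G.Adj (u (c r)) (u j) ∧ π (u j) = π (u (c r)))).card
              ≤ ∑ _r : Fin k, d := Finset.sum_le_sum (fun r _ => hbad _)
            _ = k * d := by simp [Finset.sum_const, mul_comm]
        have hle : m ≤ d + (d + k * d) :=
          hcard1 ▸ le_trans (Finset.card_le_card hsub) hcard2
        have hk2 : k + 2 ≤ l + 1 := by omega
        have : d + (d + k*d) = (k+2)*d := by ring
        have h3 : (k+2)*d ≤ (l+1)*d := Nat.mul_le_mul_right d hk2
        omega
      obtain ⟨i, hgood⟩ := hex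
      push_neg at hgood
      obtain ⟨hg1, hg2, hg3⟩ := hgood
      refine ⟨Fin.snoc c (f i), ?_, ?_, ?_, ?_⟩
      · intro r
        refine Fin.lastCases ?_ ?_ r
        · simp only [Fin.snoc_last, Fin.val_last, hf]
          constructor
          · exact Nat.le_add_right _ _
          · have := i.2; rw [Nat.succ_mul]; omega
        · intro r
          simpa only [Fin.snoc_castSucc, Fin.coe_castSucc] using hblock r
      · intro r
        refine Fin.lastCases ?_ ?_ r
        · simpa only [Fin.snoc_last] using hg1
        · intro r; simpa only [Fin.snoc_castSucc] using hv r
      · intro r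
        refine Fin.lastCases ?_ ?_ r
        · simpa only [Fin.snoc_last] using hg2
        · intro r; simpa only [Fin.snoc_castSucc] using hw r
      · intro r s hrs
        rcases Fin.eq_castSucc_or_eq_last r with ⟨r', rfl⟩ | rfl <;>
          rcases Fin.eq_castSucc_or_eq_last s with ⟨s', rfl⟩ | rfl
        · simp only [Fin.snoc_castSucc]
          exact hdist r' s' (fun h => hrs (by rw [h]))
        · simp only [Fin.snoc_castSucc, Fin.snoc_last]
          exact fun h => hg3 r' h.symm
        · simp only [Fin.snoc_castSucc, Fin.snoc_last]
          exact hg3 s'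
        · exact absurd rfl hrs
  obtain ⟨c, hblock, hv, hw, hdist⟩ := main (l-1) le_rfl
  have hcinj : Function.Injective (fun r : Fin (l-1) => π (u (c r))) := by
    intro r s h
    by_contra hrs
    exact hdist r s hrs h
  set T : Finset (Fin l) := Finset.univ.image (fun r : Fin (l-1) => π (u (c r)))
    with hT
  have hTcard : T.card = l - 1 := by
    rw [hT, Finset.card_image_of_injective _ hcinj, Finset.card_univ,
      Fintype.card_fin]
  have hwT : π w ∉ T := by
    rw [hT]
    simp only [Finset.mem_image, Finset.mem_univ, true_and, not_exists]
    exact fun r h => hw r h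
  have hvT : π v ∉ insert (π w) T := by
    simp only [Finset.mem_insert, hT, Finset.mem_image, Finset.mem_univ, true_and,
      not_or, not_exists]
    exact ⟨hne, fun r h => hv r h⟩
  have hScard : (insert (π v) (insert (π w) T)).card = l + 1 := by
    rw [Finset.card_insert_of_notMem hvT, Finset.card_insert_of_notMem hwT,
      hTcard]
    omega
  have := Finset.card_le_univ (insert (π v) (insert (π w) T))
  rw [hScard, Fintype.card_fin] at this
  omega
end

section
/- Let (d_i)_{i∈ℕ} be nonnegative reals with Σ_{i=0}^∞ d_i = 1. Let (x_{i,n})_{i,n∈ℕ} be nonnegative reals such that for every n, Σ_{i=0}^∞ x_{i,n} ≤ 1 and, moreover, there are y_{i,n} ≥ x_{i,n} with Σ_{i=0}^∞ y_{i,n} = 1 and lim_{n→∞} y_{i,n} = d_i for every i. Suppose I ⊆ ℕ is such that lim_{n→∞} x_{i,n} = d_i for i ∈ I and lim_{n→∞} x_{i,n} = 0 for i ∉ I. Then lim_{n→∞} Σ_{i=0}^∞ x_{i,n} = Σ_{i∈I} d_i. -/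
open Filter Finset

theorem stmt_17 (d : ℕ → ℝ) (hd0 : ∀ i, 0 ≤ d i) (hdsum : Summable d)
    (hd1 : ∑' i, d i = 1)
    (x y : ℕ → ℕ → ℝ)
    (hx0 : ∀ i n, 0 ≤ x i n)
    (hxs : ∀ n, Summable (fun i => x i n))
    (hx1 : ∀ n, ∑' i, x i n ≤ 1)
    (hxy : ∀ i n, x i n ≤ y i n)
    (hys : ∀ n, Summable (fun i => y i n))
    (hy1 : ∀ n, ∑' i, y i n = 1)
    (hylim : ∀ i, Filter.Tendsto (fun n => y i n) Filter.atTop (nhds (d i)))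
    (I : Set ℕ)
    (hxI : ∀ i ∈ I, Filter.Tendsto (fun n => x i n) Filter.atTop (nhds (d i)))
    (hxnI : ∀ i ∉ I, Filter.Tendsto (fun n => x i n) Filter.atTop (nhds 0)) :
    Filter.Tendsto (fun n => ∑' i, x i n) Filter.atTop (nhds (∑' i : I, d ↑i)) := by
  set g : ℕ → ℝ := I.indicator d with hgdef
  have hg0 : ∀ i, 0 ≤ g i := fun i => Set.indicator_nonneg (fun i _ => hd0 i) i
  have hgle : ∀ i, g i ≤ d i := fun i => Set.indicator_le_self' (fun i _ => hd0 i) i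
  have hgs : Summable g := Summable.of_nonneg_of_le hg0 hgle hdsum
  have hxlim : ∀ i, Tendsto (fun n => x i n) atTop (nhds (g i)) := by
    intro i
    by_cases hi : i ∈ I
    · simpa [hgdef, Set.indicator_of_mem hi] using hxI i hi
    · simpa [hgdef, Set.indicator_of_notMem hi] using hxnI i hi
  rw [tsum_subtype I d]
  rw [Metric.tendsto_atTop]
  intro ε hε
  -- choose a finite set capturing most of the mass of d
  have h1 : Tendsto (fun N => ∑ i ∈ Finset.range N, d i) atTop (nhds 1) := by
    simpa [hd1] using hdsum.hasSum.tendsto_sum_nat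
  obtain ⟨N, hN⟩ := (Metric.tendsto_atTop.1 h1) (ε/4) (by linarith)
  have hN' := hN N le_rfl
  set s := Finset.range N with hs
  set T : Set ℕ := (↑s : Set ℕ)ᶜ with hT
  have hA : 1 - ε/4 < ∑ i ∈ s, d i := by
    have := abs_lt.1 (by simpa [Real.dist_eq] using hN')
    linarith [this.1]
  -- tail of g is small
  have htg_le : ∑' i : T, g i ≤ ∑' i : T, d i := by
    exact Summable.tsum_le_tsum (fun i => hgle i) (hgs.subtype _) (hdsum.subtype _)
  have htd : ∑' i : T, d i = 1 - ∑ i ∈ s, d i := by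
    have := Summable.sum_add_tsum_compl (s := s) hdsum
    rw [hd1] at this; linarith
  have htg : ∑' i : T, g i < ε/4 := by
    rw [htd] at htg_le; linarith
  have htg0 : 0 ≤ ∑' i : T, g i :=
    tsum_nonneg (fun i => hg0 i)
  -- finite sums of x converge to finite sums of g
  have hfin : Tendsto (fun n => ∑ i ∈ s, x i n) atTop (nhds (∑ i ∈ s, g i)) :=
    tendsto_finset_sum s (fun i _ => hxlim i)
  obtain ⟨N1, hN1⟩ := (Metric.tendsto_atTop.1 hfin) (ε/4) (by linarith)
  -- finite sums of y converge to finite sums of d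
  have hfiny : Tendsto (fun n => ∑ i ∈ s, y i n) atTop (nhds (∑ i ∈ s, d i)) :=
    tendsto_finset_sum s (fun i _ => hylim i)
  obtain ⟨N2, hN2⟩ := (Metric.tendsto_atTop.1 hfiny) (ε/4) (by linarith)
  refine ⟨max N1 N2, fun n hn => ?_⟩
  have hn1 := hN1 n (le_trans (le_max_left _ _) hn)
  have hn2 := hN2 n (le_trans (le_max_right _ _) hn)
  have hsplitx := Summable.sum_add_tsum_compl (s := s) (hxs n)
  have hsplity := Summable.sum_add_tsum_compl (s := s) (hys n)
  have hsplitg := Summable.sum_add_tsum_compl (s := s) hgs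
  -- tail of x at n is small
  have htx_le : ∑' i : T, x i n ≤ ∑' i : T, y i n :=
    Summable.tsum_le_tsum (fun i => hxy i n) ((hxs n).subtype _) ((hys n).subtype _)
  have hty : ∑' i : T, y i n = 1 - ∑ i ∈ s, y i n := by
    rw [hy1 n] at hsplity; linarith
  have hysum : ∑ i ∈ s, d i - ε/4 < ∑ i ∈ s, y i n := by
    have := abs_lt.1 (by simpa [Real.dist_eq] using hn2)
    linarith [this.1]
  have htx : ∑' i : T, x i n < ε/2 := by
    rw [hty] at htx_le; linarith
  have htx0 : 0 ≤ ∑' i : T, x i n :=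
    tsum_nonneg (fun i => hx0 i n)
  have hfd := abs_lt.1 (by simpa [Real.dist_eq] using hn1)
  rw [Real.dist_eq]
  rw [← hsplitx, ← hsplitg]
  rw [abs_lt]
  constructor <;> linarith [hfd.1, hfd.2]
end
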